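/- arXiv:2105.06996 — 2 statements merged into one kernel-verified Lean document; each statement's English description precedes it below -/
import Mathlib

section
/- For every cost function c : (Fin n → Bool) → ℝ with cost Hamiltonian C: (i) ⟨∇_C ∇C⟩₀ = (2/2^n)·∑_x c(x)·dc(x) = −(1/2^n)·∑_x ∑_{j} (∂_j c(x))², and in particular this quantity is a nonpositive real number; (ii) ⟨∇_C ∇²C⟩₀ = 0, ⟨∇_C² ∇C⟩₀ = 0, and ⟨∇ ∇_C ∇C⟩₀ = 0. -/
open Matrix Asymptotics

noncomputable section

abbrev Bits (n : ℕ) := Fin n → Bool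

/-- `x` with bit `j` flipped. -/
def flipBit {n : ℕ} (j : Fin n) (x : Bits n) : Bits n := Function.update x j (!x j)

/-- The bit-flip operator `X_j`. -/
def Xop {n : ℕ} (j : Fin n) : Matrix (Bits n) (Bits n) ℂ :=
  fun x y => if y = flipBit j x then 1 else 0

/-- The transverse-field mixing Hamiltonian `B = ∑ⱼ Xⱼ`. -/
def Bop (n : ℕ) : Matrix (Bits n) (Bits n) ℂ := ∑ j : Fin n, Xop j

/-- The cost Hamiltonian: diagonal matrix with entries `c x`. -/
def Cop {n : ℕ} (c : Bits n → ℝ) : Matrix (Bits n) (Bits n) ℂ :=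
  Matrix.diagonal fun x => (c x : ℂ)

/-- The gradient superoperator `∇A = [B, A]`. -/
def gradB {n : ℕ} (A : Matrix (Bits n) (Bits n) ℂ) : Matrix (Bits n) (Bits n) ℂ :=
  Bop n * A - A * Bop n

/-- The gradient with respect to the cost Hamiltonian `∇_C A = [C, A]`. -/
def gradC {n : ℕ} (c : Bits n → ℝ) (A : Matrix (Bits n) (Bits n) ℂ) :
    Matrix (Bits n) (Bits n) ℂ :=
  Cop c * A - A * Cop c

/-- The uniform superposition state `|s⟩`, every entry `(2^n)^{-1/2}`. -/
def sVec (n : ℕ) : Bits n → ℂ := fun _ => ((Real.sqrt (2 ^ n))⁻¹ : ℝ)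

/-- Initial-state expectation value `⟨A⟩₀ = ⟨s|A|s⟩`. -/
def expect0 {n : ℕ} (A : Matrix (Bits n) (Bits n) ℂ) : ℂ :=
  star (sVec n) ⬝ᵥ (A *ᵥ sVec n)

/-- Partial cost difference `∂ⱼc(x) = c(x⁽ʲ⁾) − c(x)`. -/
def pd {n : ℕ} (c : Bits n → ℝ) (j : Fin n) (x : Bits n) : ℝ := c (flipBit j x) - c x

/-- Cost divergence `dc(x) = ∑ⱼ ∂ⱼc(x)`. -/
def dcFun {n : ℕ} (c : Bits n → ℝ) (x : Bits n) : ℝ := ∑ j : Fin n, pd c j x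

/-! Commutators with the symmetric matrices `B` and `C` exchange symmetric and skew-symmetric
matrices, and the quadratic form of the real vector `s` vanishes on skew-symmetric ones; this kills
`⟨∇_C ∇²C⟩₀` and `⟨∇_C² ∇C⟩₀`. `⟨∇ A⟩₀ = 0` for every `A` because `s` is an eigenvector of `B`.
Finally `∇_C ∇C` has entries `-Bₓᵧ (c y - c x)²`, and the identity
`(∂ⱼc)² + 2 c ∂ⱼc = c(x⁽ʲ⁾)² - c(x)²`, summed over `x`, turns `∑ c · dc` into `-½ ∑ (∂ⱼc)²`. -/

namespace Matrix

variable {ι R : Type*} [Fintype ι] [CommRing R]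

theorem dotProduct_mulVec_self_eq_zero_of_transpose_eq_neg [IsAddTorsionFree R]
    {A : Matrix ι ι R} (hA : Aᵀ = -A) (u : ι → R) : u ⬝ᵥ (A *ᵥ u) = 0 := by
  refine self_eq_neg.mp ?_
  calc u ⬝ᵥ (A *ᵥ u) = u ⬝ᵥ (Aᵀ *ᵥ u) := by
        rw [mulVec_transpose, dotProduct_mulVec]
        exact dotProduct_comm _ _
    _ = -(u ⬝ᵥ (A *ᵥ u)) := by rw [hA, neg_mulVec, dotProduct_neg]

theorem dotProduct_commutator_mulVec_eq_zero {M : Matrix ι ι R} {u v : ι → R} {μ : R}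
    (hu : u ᵥ* M = μ • u) (hv : M *ᵥ v = μ • v) (A : Matrix ι ι R) :
    u ⬝ᵥ ((M * A - A * M) *ᵥ v) = 0 := by
  rw [sub_mulVec, dotProduct_sub, ← mulVec_mulVec, ← mulVec_mulVec, dotProduct_mulVec, hu, hv,
    mulVec_smul, smul_dotProduct, dotProduct_smul, sub_self]

theorem transpose_commutator_of_isSymm {S : Matrix ι ι R} (hS : S.IsSymm) (A : Matrix ι ι R) :
    (S * A - A * S)ᵀ = -(S * Aᵀ - Aᵀ * S) := by
  rw [transpose_sub, transpose_mul, transpose_mul, hS.eq, neg_sub]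

end Matrix

section BitFlips

variable {n : ℕ}

theorem flipBit_involutive (j : Fin n) : Function.Involutive (flipBit j) := by
  intro x
  simp [flipBit, Function.update_idem]

theorem sum_comp_flipBit {M : Type*} [AddCommMonoid M] (j : Fin n) (f : Bits n → M) :
    ∑ x, f (flipBit j x) = ∑ x, f x :=
  (flipBit_involutive j).bijective.sum_comp f

theorem Xop_mulVec (j : Fin n) (v : Bits n → ℂ) : Xop j *ᵥ v = fun x => v (flipBit j x) := by
  ext x
  simp [mulVec, dotProduct, Xop]

theorem Xop_isSymm (j : Fin n) : (Xop j).IsSymm := by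
  ext x y
  simp only [transpose_apply, Xop]
  exact if_congr ⟨fun h => by rw [h, flipBit_involutive], fun h => by rw [h, flipBit_involutive]⟩
    rfl rfl

theorem Bop_mulVec (v : Bits n → ℂ) : Bop n *ᵥ v = fun x => ∑ j, v (flipBit j x) := by
  ext x
  simp [Bop, sum_mulVec, Xop_mulVec]

theorem Bop_isSymm : (Bop n).IsSymm := by
  rw [IsSymm, Bop, transpose_sum]
  exact Finset.sum_congr rfl fun j _ => Xop_isSymm j

theorem Cop_isSymm (c : Bits n → ℝ) : (Cop c).IsSymm :=
  isSymm_diagonal _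

end BitFlips

section Gradients

variable {n : ℕ}

theorem gradB_transpose (A : Matrix (Bits n) (Bits n) ℂ) : (gradB A)ᵀ = -gradB Aᵀ :=
  transpose_commutator_of_isSymm Bop_isSymm A

theorem gradC_transpose (c : Bits n → ℝ) (A : Matrix (Bits n) (Bits n) ℂ) :
    (gradC c A)ᵀ = -gradC c Aᵀ :=
  transpose_commutator_of_isSymm (Cop_isSymm c) A

theorem gradB_neg (A : Matrix (Bits n) (Bits n) ℂ) : gradB (-A) = -gradB A := by
  simp only [gradB, mul_neg, neg_mul, neg_sub_neg, neg_sub]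

theorem gradC_neg (c : Bits n → ℝ) (A : Matrix (Bits n) (Bits n) ℂ) :
    gradC c (-A) = -gradC c A := by
  simp only [gradC, mul_neg, neg_mul, neg_sub_neg, neg_sub]

theorem gradC_gradB_Cop_apply (c : Bits n → ℝ) (x y : Bits n) :
    gradC c (gradB (Cop c)) x y = -(Bop n x y * ((c y : ℂ) - c x) ^ 2) := by
  simp only [gradC, gradB, Cop, mul_sub, sub_mul, Matrix.sub_apply, ← Matrix.mul_assoc,
    diagonal_mul_diagonal, diagonal_mul, mul_diagonal]
  ring

end Gradients

section Expectation

variable {n : ℕ}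

theorem star_sVec : star (sVec n) = sVec n := by
  ext
  simp [sVec]

theorem expect0_eq_dotProduct (A : Matrix (Bits n) (Bits n) ℂ) :
    expect0 A = sVec n ⬝ᵥ (A *ᵥ sVec n) := by
  rw [expect0, star_sVec]

theorem expect0_eq_sum (A : Matrix (Bits n) (Bits n) ℂ) :
    expect0 A = ((2 ^ n : ℝ)⁻¹ : ℂ) * ∑ x, ∑ y, A x y := by
  have hs : ((Real.sqrt (2 ^ n))⁻¹ : ℂ) * (Real.sqrt (2 ^ n))⁻¹ = ((2 ^ n : ℝ)⁻¹ : ℂ) := by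
    norm_cast
    rw [← mul_inv, Real.mul_self_sqrt (by positivity)]
  simp only [expect0_eq_dotProduct, dotProduct, mulVec, sVec, Finset.mul_sum, ← hs]
  refine Finset.sum_congr rfl fun x _ => Finset.sum_congr rfl fun y _ => ?_
  push_cast
  ring

theorem expect0_eq_zero_of_transpose_eq_neg {A : Matrix (Bits n) (Bits n) ℂ} (hA : Aᵀ = -A) :
    expect0 A = 0 := by
  rw [expect0_eq_dotProduct]
  exact dotProduct_mulVec_self_eq_zero_of_transpose_eq_neg hA _

theorem Bop_mulVec_sVec : Bop n *ᵥ sVec n = (n : ℂ) • sVec n := by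
  ext x
  simp [Bop_mulVec, sVec]

theorem expect0_gradB (A : Matrix (Bits n) (Bits n) ℂ) : expect0 (gradB A) = 0 := by
  rw [expect0_eq_dotProduct]
  refine dotProduct_commutator_mulVec_eq_zero ?_ Bop_mulVec_sVec A
  rw [← mulVec_transpose, Bop_isSymm.eq, Bop_mulVec_sVec]

end Expectation

theorem sum_mul_dcFun {n : ℕ} (c : Bits n → ℝ) :
    ∑ x, c x * dcFun c x = -(∑ x, ∑ j, pd c j x ^ 2) / 2 := by
  have hsq : ∀ x j, pd c j x ^ 2 + 2 * (c x * pd c j x) = c (flipBit j x) ^ 2 - c x ^ 2 := by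
    intro x j
    simp only [pd]
    ring
  have hzero : ∑ x, ∑ j, (pd c j x ^ 2 + 2 * (c x * pd c j x)) = 0 := by
    simp only [hsq]
    rw [Finset.sum_comm]
    exact Finset.sum_eq_zero fun j _ => by
      rw [Finset.sum_sub_distrib, sum_comp_flipBit j fun x => c x ^ 2, sub_self]
  simp only [Finset.sum_add_distrib, ← Finset.mul_sum] at hzero
  simp only [dcFun]
  linarith

theorem expect0_gradC_gradB_Cop {n : ℕ} (c : Bits n → ℝ) :
    expect0 (gradC c (gradB (Cop c)))
      = ((-(1 / 2 ^ n) * ∑ x : Bits n, ∑ j : Fin n, (pd c j x) ^ 2 : ℝ) : ℂ) := by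
  have hrow : ∀ x, ∑ y, gradC c (gradB (Cop c)) x y = -∑ j, ((pd c j x ^ 2 : ℝ) : ℂ) := by
    intro x
    have hB := congrFun (Bop_mulVec fun y => ((c y : ℂ) - c x) ^ 2) x
    simp only [mulVec, dotProduct] at hB
    simp only [gradC_gradB_Cop_apply, Finset.sum_neg_distrib, hB, pd]
    push_cast
    rfl
  rw [expect0_eq_sum, Finset.sum_congr rfl fun x _ => hrow x]
  push_cast
  simp only [Finset.sum_neg_distrib]
  ring

theorem stmt3_general (n : ℕ) (c : Bits n → ℝ) :
    (expect0 (gradC c (gradB (Cop c)))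
        = ((2 / 2 ^ n * ∑ x : Bits n, c x * dcFun c x : ℝ) : ℂ)) ∧
    (expect0 (gradC c (gradB (Cop c)))
        = ((-(1 / 2 ^ n) * ∑ x : Bits n, ∑ j : Fin n, (pd c j x) ^ 2 : ℝ) : ℂ)) ∧
    ((2 / 2 ^ n * ∑ x : Bits n, c x * dcFun c x : ℝ) ≤ 0) ∧
    expect0 (gradC c (gradB (gradB (Cop c)))) = 0 ∧
    expect0 (gradC c (gradC c (gradB (Cop c)))) = 0 ∧
    expect0 (gradB (gradC c (gradB (Cop c)))) = 0 := by
  have hreal : (2 / 2 ^ n * ∑ x : Bits n, c x * dcFun c x : ℝ)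
      = -(1 / 2 ^ n) * ∑ x : Bits n, ∑ j : Fin n, (pd c j x) ^ 2 := by
    rw [sum_mul_dcFun]
    ring
  refine ⟨by rw [hreal, expect0_gradC_gradB_Cop], expect0_gradC_gradB_Cop c, ?_, ?_, ?_,
    expect0_gradB _⟩
  · rw [hreal, neg_mul]
    exact neg_nonpos.mpr (by positivity)
  all_goals
    apply expect0_eq_zero_of_transpose_eq_neg
    simp only [gradC_transpose, gradB_transpose, (Cop_isSymm c).eq, gradB_neg, gradC_neg, neg_neg]

theorem stmt3 (n : ℕ) (hn : 1 ≤ n) (c : Bits n → ℝ) :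
    (expect0 (gradC c (gradB (Cop c)))
        = ((2 / 2 ^ n * ∑ x : Bits n, c x * dcFun c x : ℝ) : ℂ)) ∧
    (expect0 (gradC c (gradB (Cop c)))
        = ((-(1 / 2 ^ n) * ∑ x : Bits n, ∑ j : Fin n, (pd c j x) ^ 2 : ℝ) : ℂ)) ∧
    ((2 / 2 ^ n * ∑ x : Bits n, c x * dcFun c x : ℝ) ≤ 0) ∧
    expect0 (gradC c (gradB (gradB (Cop c)))) = 0 ∧
    expect0 (gradC c (gradC c (gradB (Cop c)))) = 0 ∧
    expect0 (gradB (gradC c (gradB (Cop c)))) = 0 :=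
  stmt3_general n c
end
end

section
/- (QAOA₁ conjugation series.) For every n-qubit matrix A and all real γ, β, with Q := exp(−(iβ)•B)·exp(−(iγ)•C), the doubly indexed family (ℓ,k) ↦ ((iβ)^k·(iγ)^ℓ/(ℓ!·k!)) • ∇_C^ℓ(∇^k A) over ℕ × ℕ is summable in the space of matrices, and its sum equals Qᴴ · A · Q. -/
open Matrix Asymptotics

noncomputable section

/-- The QAOA₁ operator `Q(γ,β) = exp(−iβB)·exp(−iγC)`. -/
def Qaoa1 {n : ℕ} (c : Bits n → ℝ) (γ β : ℝ) : Matrix (Bits n) (Bits n) ℂ :=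
  NormedSpace.exp ((-(Complex.I * (β : ℂ))) • Bop n) *
    NormedSpace.exp ((-(Complex.I * (γ : ℂ))) • Cop c)

/-- Probability of measuring the bitstring `x` in the QAOA₁ state. -/
def P1 {n : ℕ} (c : Bits n → ℝ) (x : Bits n) (γ β : ℝ) : ℝ :=
  ‖(Qaoa1 c γ β *ᵥ sVec n) x‖ ^ 2

/-- The QAOA₁ cost expectation value `⟨C⟩₁(γ,β)`. -/
def expC1 {n : ℕ} (c : Bits n → ℝ) (γ β : ℝ) : ℝ :=
  (star (Qaoa1 c γ β *ᵥ sVec n) ⬝ᵥ (Cop c *ᵥ (Qaoa1 c γ β *ᵥ sVec n))).re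
/-! As `B` and `C` are Hermitian, `Qᴴ A Q = e^{iγC} e^{iβB} A e^{-iβB} e^{-iγC}`. In the Banach
algebra of operators on matrices, `ad X = L_X - R_X` with commuting left and right
multiplications, so `e^{ad X} = L_{e^X} R_{e^{-X}}` is conjugation by `e^X` (Hadamard's lemma).
Hence `Qᴴ A Q = e^{ad(iγC)} e^{ad(iβB)} A`, and multiplying out the two exponential series, which
are absolutely convergent, gives the double series. -/

open NormedSpace

lemma NormedSpace.mem_eball_expSeries_radius (𝕂 : Type*) {𝔸 : Type*} [RCLike 𝕂] [NormedRing 𝔸]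
    [NormedAlgebra 𝕂 𝔸] (x : 𝔸) : x ∈ Metric.eball (0 : 𝔸) (expSeries 𝕂 𝔸).radius :=
  (expSeries_radius_eq_top 𝕂 𝔸).symm ▸ edist_lt_top _ _

namespace ContinuousLinearMap

variable (𝕂 : Type*) {𝔸 : Type*} [RCLike 𝕂] [NormedRing 𝔸] [NormedAlgebra 𝕂 𝔸]

def mulLeftRingHom : 𝔸 →+* (𝔸 →L[𝕂] 𝔸) where
  toFun := mul 𝕂 𝔸
  map_one' := by ext; simp
  map_mul' _ _ := by ext; simp [mul_assoc]
  map_zero' := by ext; simp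
  map_add' _ _ := by ext; simp

def mulRightRingHom : 𝔸ᵐᵒᵖ →+* (𝔸 →L[𝕂] 𝔸) where
  toFun x := (mul 𝕂 𝔸).flip x.unop
  map_one' := by ext; simp
  map_mul' _ _ := by ext; simp [mul_assoc]
  map_zero' := by ext; simp
  map_add' _ _ := by ext; simp

def ad (X : 𝔸) : 𝔸 →L[𝕂] 𝔸 := mul 𝕂 𝔸 X - (mul 𝕂 𝔸).flip X

variable {𝕂}

@[simp] lemma ad_apply (X M : 𝔸) : ad 𝕂 X M = X * M - M * X := rfl

lemma ad_smul (t : 𝕂) (X : 𝔸) : ad 𝕂 (t • X) = t • ad 𝕂 X := by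
  ext M
  simp [smul_sub]

lemma ad_smul_pow_apply (t : 𝕂) (X M : 𝔸) (k : ℕ) :
    (ad 𝕂 (t • X) ^ k) M = t ^ k • (ad 𝕂 X ^ k) M := by
  induction k with
  | zero => simp
  | succ k ih =>
    rw [pow_succ', mul_apply_eq_comp, ih, map_smul, ad_smul, _root_.smul_apply, smul_smul,
      ← pow_succ, pow_succ' (ad 𝕂 X), mul_apply_eq_comp]

variable [CompleteSpace 𝔸]

lemma exp_mul_left (X : 𝔸) : exp (mul 𝕂 𝔸 X) = mul 𝕂 𝔸 (exp X) :=
  (map_exp_of_mem_ball (mulLeftRingHom 𝕂) (mul 𝕂 𝔸).continuous X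
    (mem_eball_expSeries_radius 𝕂 X)).symm

lemma exp_mul_right (X : 𝔸) : exp ((mul 𝕂 𝔸).flip X) = (mul 𝕂 𝔸).flip (exp X) := by
  have h := map_exp_of_mem_ball (mulRightRingHom 𝕂 (𝔸 := 𝔸))
    ((mul 𝕂 𝔸).flip.continuous.comp MulOpposite.continuous_unop) (MulOpposite.op X)
    (mem_eball_expSeries_radius 𝕂 _)
  rw [exp_op] at h
  exact h.symm

lemma exp_ad_apply (X A : 𝔸) : exp (ad 𝕂 X) A = exp X * A * exp (-X) := by
  have hcomm : Commute (mul 𝕂 𝔸 X) ((mul 𝕂 𝔸).flip (-X)) := by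
    ext M
    simp [mul_assoc]
  rw [ad, sub_eq_add_neg, ← map_neg, exp_add_of_commute_of_mem_ball hcomm
    (mem_eball_expSeries_radius 𝕂 _) (mem_eball_expSeries_radius 𝕂 _), exp_mul_left,
    exp_mul_right]
  simp [mul_assoc]

theorem hasSum_ad_pow_mul_ad_pow_apply (X Y A : 𝔸) :
    HasSum (fun q : ℕ × ℕ =>
        (((q.1.factorial⁻¹ : 𝕂) • ad 𝕂 X ^ q.1) * ((q.2.factorial⁻¹ : 𝕂) • ad 𝕂 Y ^ q.2)) A)
      (exp X * exp Y * A * (exp (-Y) * exp (-X))) := by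
  have hX := norm_expSeries_summable' (𝕂 := 𝕂) (ad 𝕂 X)
  have hY := norm_expSeries_summable' (𝕂 := 𝕂) (ad 𝕂 Y)
  have hprod : HasSum (fun q : ℕ × ℕ =>
      ((q.1.factorial⁻¹ : 𝕂) • ad 𝕂 X ^ q.1) * ((q.2.factorial⁻¹ : 𝕂) • ad 𝕂 Y ^ q.2))
      (exp (ad 𝕂 X) * exp (ad 𝕂 Y)) := by
    rw [exp_eq_tsum 𝕂, tsum_mul_tsum_of_summable_norm hX hY]
    exact (summable_mul_of_summable_norm hX hY).hasSum
  have h := hprod.mapL (apply 𝕂 𝔸 A)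
  rw [apply_apply, mul_apply_eq_comp, exp_ad_apply, exp_ad_apply] at h
  simpa only [apply_apply, mul_assoc] using h

theorem hasSum_smul_ad_pow_apply_ad_pow_apply (s t : 𝕂) (X Y A : 𝔸) :
    HasSum (fun q : ℕ × ℕ =>
        ((t ^ q.2 * s ^ q.1) / ((q.1.factorial : 𝕂) * (q.2.factorial : 𝕂))) •
          (ad 𝕂 X ^ q.1) ((ad 𝕂 Y ^ q.2) A))
      (exp (s • X) * exp (t • Y) * A * (exp (-(t • Y)) * exp (-(s • X)))) := by
  have hterm : ∀ q : ℕ × ℕ,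
      (((q.1.factorial⁻¹ : 𝕂) • ad 𝕂 (s • X) ^ q.1) *
        ((q.2.factorial⁻¹ : 𝕂) • ad 𝕂 (t • Y) ^ q.2)) A =
      ((t ^ q.2 * s ^ q.1) / ((q.1.factorial : 𝕂) * (q.2.factorial : 𝕂))) •
        (ad 𝕂 X ^ q.1) ((ad 𝕂 Y ^ q.2) A) := by
    intro q
    simp only [mul_apply_eq_comp, _root_.smul_apply, ad_smul_pow_apply, map_smul, smul_smul]
    congr 1
    ring
  exact funext hterm ▸ hasSum_ad_pow_mul_ad_pow_apply (s • X) (t • Y) A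

end ContinuousLinearMap

lemma flipBit_flipBit {n : ℕ} (j : Fin n) (x : Bits n) : flipBit j (flipBit j x) = x := by
  simp [flipBit]

lemma Xop_isHermitian {n : ℕ} (j : Fin n) : (Xop j).IsHermitian := by
  ext x y
  have h : x = flipBit j y ↔ y = flipBit j x :=
    ⟨fun h => by rw [h, flipBit_flipBit], fun h => by rw [h, flipBit_flipBit]⟩
  simp [Xop, h, apply_ite (star : ℂ → ℂ)]

lemma Bop_isHermitian (n : ℕ) : (Bop n).IsHermitian :=
  isSelfAdjoint_sum _ fun j _ => Xop_isHermitian j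

lemma Cop_isHermitian {n : ℕ} (c : Bits n → ℝ) : (Cop c).IsHermitian :=
  isHermitian_diagonal_iff.mpr fun x => Complex.conj_ofReal (c x)

lemma Matrix.IsHermitian.conjTranspose_exp_neg_I_mul_smul {m : Type*} [Fintype m] [DecidableEq m]
    {H : Matrix m m ℂ} (hH : H.IsHermitian) (t : ℝ) :
    (NormedSpace.exp (-(Complex.I * t) • H))ᴴ = NormedSpace.exp ((Complex.I * t) • H) := by
  rw [← exp_conjTranspose, conjTranspose_smul, hH.eq, star_neg, star_mul', Complex.star_def,
    Complex.conj_I, Complex.conj_ofReal, neg_mul, neg_neg]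

lemma conjTranspose_Qaoa1 {n : ℕ} (c : Bits n → ℝ) (γ β : ℝ) :
    (Qaoa1 c γ β)ᴴ = exp ((Complex.I * γ) • Cop c) * exp ((Complex.I * β) • Bop n) := by
  rw [Qaoa1, conjTranspose_mul, IsHermitian.conjTranspose_exp_neg_I_mul_smul (Cop_isHermitian c),
    IsHermitian.conjTranspose_exp_neg_I_mul_smul (Bop_isHermitian n)]

theorem stmt8_general (n : ℕ) (c : Bits n → ℝ) (A : Matrix (Bits n) (Bits n) ℂ)
    (γ β : ℝ) :
    Summable (fun q : ℕ × ℕ =>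
      ((Complex.I * (β : ℂ)) ^ q.2 * (Complex.I * (γ : ℂ)) ^ q.1
          / ((q.1.factorial : ℂ) * (q.2.factorial : ℂ))) •
        (gradC c)^[q.1] (gradB^[q.2] A)) ∧
    (∑' q : ℕ × ℕ,
      ((Complex.I * (β : ℂ)) ^ q.2 * (Complex.I * (γ : ℂ)) ^ q.1
          / ((q.1.factorial : ℂ) * (q.2.factorial : ℂ))) •
        (gradC c)^[q.1] (gradB^[q.2] A))
      = (Qaoa1 c γ β)ᴴ * A * Qaoa1 c γ β := by
  -- Any algebra norm will do: it induces the product topology in which the statement is posed.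
  let : NormedRing (Matrix (Bits n) (Bits n) ℂ) := Matrix.linftyOpNormedRing
  let : NormedAlgebra ℂ (Matrix (Bits n) (Bits n) ℂ) := Matrix.linftyOpNormedAlgebra
  have hsum := ContinuousLinearMap.hasSum_smul_ad_pow_apply_ad_pow_apply
    (Complex.I * γ) (Complex.I * β) (Cop c) (Bop n) A
  simp only [pow_apply_eq_iterate] at hsum
  rw [conjTranspose_Qaoa1, Qaoa1, neg_smul, neg_smul]
  exact ⟨hsum.summable, hsum.tsum_eq⟩

theorem stmt8 (n : ℕ) (hn : 1 ≤ n) (c : Bits n → ℝ) (A : Matrix (Bits n) (Bits n) ℂ)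
    (γ β : ℝ) :
    Summable (fun q : ℕ × ℕ =>
      ((Complex.I * (β : ℂ)) ^ q.2 * (Complex.I * (γ : ℂ)) ^ q.1
          / ((q.1.factorial : ℂ) * (q.2.factorial : ℂ))) •
        (gradC c)^[q.1] (gradB^[q.2] A)) ∧
    (∑' q : ℕ × ℕ,
      ((Complex.I * (β : ℂ)) ^ q.2 * (Complex.I * (γ : ℂ)) ^ q.1
          / ((q.1.factorial : ℂ) * (q.2.factorial : ℂ))) •
        (gradC c)^[q.1] (gradB^[q.2] A))
      = (Qaoa1 c γ β)ᴴ * A * Qaoa1 c γ β :=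
  stmt8_general n c A γ β
end
end
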